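/- arXiv:2104.11323 — 5 statements merged into one kernel-verified Lean document; each statement's English description precedes it below -/
import Mathlib

section
/- For 0 < q < 1, the Caputo fractional derivative with lower terminal 0 of a non-constant continuously differentiable T-periodic function f : [0,∞) → ℝ is not T-periodic. -/
/-!
Write `g = f'`. Splitting `∫₀^{t+T}` at `T` and using the periodicity of `g`, periodicity of
`D^q f` forces the memory term `∫₀^T (x - τ)^(-q) g(τ) dτ` to vanish for every `x ≥ T`. With
`x = 1/ε` this says `∫₀^T (1 - ετ)^(-q) g(τ) dτ = 0` for all small `ε > 0`. The binomial series
of `(1 - y)^(-q)` has the positive coefficients `q(q+1)⋯(q+k-1)/k!`, so comparing asymptotic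
expansions in `ε` shows that every moment `∫₀^T τ^k g(τ) dτ` vanishes. By Weierstrass
approximation `∫₀^T g² = 0`, hence `g = 0` on `[0, T]`: `f` is constant on `[0, T]`, and by
periodicity on `[0, ∞)`.
-/

open MeasureTheory Real Filter

/-- Caputo fractional derivative of order `q` with starting point `0`. -/
noncomputable def caputo (q : ℝ) (f : ℝ → ℝ) (t : ℝ) : ℝ :=
  (1 / Real.Gamma (1 - q)) * ∫ τ in (0:ℝ)..t, (t - τ) ^ (-q) * deriv f τ

/-- Two-parameter Mittag-Leffler function (real arguments). -/
noncomputable def ML (a b z : ℝ) : ℝ :=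
  ∑' k : ℕ, z ^ k / Real.Gamma (a * k + b)

open Set Topology Asymptotics

theorem Ring.choose_add_sub_one_pos {q : ℝ} (hq : 0 < q) (n : ℕ) :
    0 < Ring.choose (q + n - 1) n := by
  have h := Ring.factorial_nsmul_multichoose_eq_ascPochhammer q n
  rw [Polynomial.ascPochhammer_smeval_eq_eval, Ring.multichoose_eq] at h
  have := ascPochhammer_pos n q hq
  rw [← h, nsmul_eq_mul] at this
  exact pos_of_mul_pos_right this (by positivity)

theorem HasFPowerSeriesAt.exists_bound_sub_sum {φ : ℝ → ℝ} {c : ℕ → ℝ}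
    (hφ : HasFPowerSeriesAt φ (FormalMultilinearSeries.ofScalars ℝ c) 0) (n : ℕ) :
    ∃ C δ, 0 ≤ C ∧ 0 < δ ∧ ∀ y, |y| < δ →
      ContinuousAt φ y ∧ |φ y - ∑ k ∈ Finset.range n, c k * y ^ k| ≤ C * |y| ^ n := by
  obtain ⟨C, hC0, hC⟩ := (hφ.isBigO_sub_partialSum_pow n).exists_pos
  have hcont : ∀ᶠ y in 𝓝 0, ContinuousAt φ y :=
    hφ.analyticAt.eventually_analyticAt.mono fun _ h => h.continuousAt
  obtain ⟨δ, hδ, h⟩ := Metric.eventually_nhds_iff.1 (hC.bound.and hcont)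
  refine ⟨C, δ, hC0.le, hδ, fun y hy => ⟨(h (by simpa using hy)).2, ?_⟩⟩
  have := (h (by simpa using hy)).1
  simpa [FormalMultilinearSeries.partialSum, FormalMultilinearSeries.ofScalars_apply_eq,
    mul_comm] using this

theorem integral_sum_mul_pow_mul {g : ℝ → ℝ} {a b : ℝ} (hg : ContinuousOn g (uIcc a b))
    (c : ℕ → ℝ) (n : ℕ) (ε : ℝ) :
    ∫ τ in a..b, (∑ k ∈ Finset.range n, c k * (ε * τ) ^ k) * g τ
      = ∑ k ∈ Finset.range n, c k * (∫ τ in a..b, τ ^ k * g τ) * ε ^ k := by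
  have hint (k : ℕ) : IntervalIntegrable (fun τ => c k * (ε * τ) ^ k * g τ) volume a b :=
    ((by fun_prop : Continuous fun τ => c k * (ε * τ) ^ k).continuousOn.mul hg).intervalIntegrable
  simp_rw [Finset.sum_mul]
  rw [intervalIntegral.integral_finsetSum fun k _ => hint k]
  refine Finset.sum_congr rfl fun k _ => ?_
  rw [← intervalIntegral.integral_const_mul, ← intervalIntegral.integral_mul_const]
  congr 1; ext τ; ring

theorem isBigO_integral_comp_mul_sub_sum_moments {φ : ℝ → ℝ} {c : ℕ → ℝ}
    (hφ : HasFPowerSeriesAt φ (FormalMultilinearSeries.ofScalars ℝ c) 0)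
    {g : ℝ → ℝ} {a b : ℝ} (hg : ContinuousOn g (uIcc a b)) (n : ℕ) :
    (fun ε => (∫ τ in a..b, φ (ε * τ) * g τ) -
        ∑ k ∈ Finset.range n, c k * (∫ τ in a..b, τ ^ k * g τ) * ε ^ k)
      =O[𝓝 0] fun ε => ε ^ n := by
  obtain ⟨C, δ, hC, hδ, hφδ⟩ := hφ.exists_bound_sub_sum n
  obtain ⟨B, hB⟩ := isCompact_uIcc.exists_bound_of_continuousOn hg
  obtain ⟨R, hτR⟩ := (isCompact_uIcc (a := a) (b := b)).exists_bound_of_continuousOn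
    continuous_id.continuousOn
  refine IsBigO.of_bound (C * R ^ n * B * |b - a|) ?_
  have hsmall : ∀ᶠ ε : ℝ in 𝓝 0, |ε| * R < δ := by
    have : Tendsto (fun ε : ℝ => |ε| * R) (𝓝 0) (𝓝 0) :=
      (by fun_prop : Continuous fun ε : ℝ => |ε| * R).tendsto' 0 0 (by simp)
    exact this.eventually (gt_mem_nhds hδ)
  filter_upwards [hsmall] with ε hε
  have hετ : ∀ τ ∈ uIcc a b, |ε * τ| < δ := fun τ hτ => by
    rw [abs_mul]
    exact lt_of_le_of_lt (mul_le_mul_of_nonneg_left (hτR τ hτ) (abs_nonneg ε)) hε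
  have hint : IntervalIntegrable (fun τ => φ (ε * τ) * g τ) volume a b := by
    refine (ContinuousOn.mul (fun τ hτ => ?_) hg).intervalIntegrable
    exact ((hφδ _ (hετ τ hτ)).1.comp (continuous_const_mul ε).continuousAt).continuousWithinAt
  have hpoly : IntervalIntegrable
      (fun τ => (∑ k ∈ Finset.range n, c k * (ε * τ) ^ k) * g τ) volume a b := by
    refine (ContinuousOn.mul ?_ hg).intervalIntegrable
    exact (continuous_finsetSum _ fun k _ => by fun_prop).continuousOn
  rw [← integral_sum_mul_pow_mul hg, ← intervalIntegral.integral_sub hint hpoly]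
  have hR0 : 0 ≤ R := (norm_nonneg _).trans (hτR a left_mem_uIcc)
  refine (intervalIntegral.norm_integral_le_of_norm_le_const
    (C := C * (|ε| * R) ^ n * B) fun τ hτ => ?_).trans_eq
    (by rw [norm_pow, Real.norm_eq_abs]; ring)
  have hτ' := uIoc_subset_uIcc hτ
  rw [← sub_mul, norm_mul, Real.norm_eq_abs]
  refine mul_le_mul ((hφδ _ (hετ τ hτ')).2.trans ?_) (hB τ hτ') (norm_nonneg _)
    (mul_nonneg hC (pow_nonneg (mul_nonneg (abs_nonneg ε) hR0) n))
  gcongr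
  rw [abs_mul]
  exact mul_le_mul_of_nonneg_left (by simpa using hτR τ hτ') (abs_nonneg ε)

theorem eq_zero_of_isBigO_sub_sum_pow {F : ℝ → ℝ} {a : ℕ → ℝ} (hF : F =ᶠ[𝓝[>] 0] 0)
    (h : ∀ n, (fun ε => F ε - ∑ k ∈ Finset.range n, a k * ε ^ k) =O[𝓝[>] 0] fun ε => ε ^ n)
    (n : ℕ) : a n = 0 := by
  induction n using Nat.strong_induction_on with
  | _ n ih =>
  by_contra han
  have hterm : (fun ε => a n * ε ^ n) =O[𝓝[>] 0] fun ε => ε ^ (n + 1) := by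
    refine (h (n + 1)).neg_left.congr' ?_ EventuallyEq.rfl
    filter_upwards [hF] with ε hε
    rw [Finset.sum_range_succ, Finset.sum_eq_zero fun k hk => by
      rw [ih k (Finset.mem_range.1 hk), zero_mul]]
    simp [hε]
  have hsmall : (fun ε : ℝ => ε ^ n) =o[𝓝[>] 0] fun ε => ε ^ n :=
    (isLittleO_const_mul_left_iff han).1 <|
      hterm.trans_isLittleO ((isLittleO_pow_pow n.lt_succ_self).mono nhdsWithin_le_nhds)
  have hne : ∀ᶠ ε in 𝓝[>] (0 : ℝ), ε ^ n ≠ 0 :=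
    eventually_mem_nhdsWithin.mono fun ε hε => pow_ne_zero n (ne_of_gt hε)
  exact isLittleO_irrefl hne.frequently hsmall

theorem moments_eq_zero_of_integral_comp_mul_eq_zero {φ : ℝ → ℝ} {c : ℕ → ℝ}
    (hφ : HasFPowerSeriesAt φ (FormalMultilinearSeries.ofScalars ℝ c) 0) (hc : ∀ n, c n ≠ 0)
    {g : ℝ → ℝ} {a b : ℝ} (hg : ContinuousOn g (uIcc a b))
    (h : ∀ᶠ ε in 𝓝[>] 0, ∫ τ in a..b, φ (ε * τ) * g τ = 0) (n : ℕ) :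
    ∫ τ in a..b, τ ^ n * g τ = 0 :=
  (mul_eq_zero.1 (eq_zero_of_isBigO_sub_sum_pow h
    (fun n => (isBigO_integral_comp_mul_sub_sum_moments hφ hg n).mono nhdsWithin_le_nhds) n)
    ).resolve_left (hc n)

theorem integral_eval_mul_eq_zero_of_moments {g : ℝ → ℝ} {a b : ℝ}
    (hg : ContinuousOn g (uIcc a b)) (hm : ∀ n : ℕ, ∫ τ in a..b, τ ^ n * g τ = 0)
    (p : Polynomial ℝ) : ∫ τ in a..b, p.eval τ * g τ = 0 := by
  simp_rw [Polynomial.eval_eq_sum_range, Finset.sum_mul, mul_assoc]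
  have hint (k : ℕ) : IntervalIntegrable (fun τ => τ ^ k * g τ) volume a b :=
    ((continuous_pow k).continuousOn.mul hg).intervalIntegrable
  rw [intervalIntegral.integral_finsetSum fun k _ => (hint k).const_mul (p.coeff k)]
  exact Finset.sum_eq_zero fun k _ => by rw [intervalIntegral.integral_const_mul, hm k, mul_zero]

theorem integral_mul_self_eq_zero_of_moments {g : ℝ → ℝ} {a b : ℝ} (hab : a ≤ b)
    (hg : ContinuousOn g (Icc a b)) (hm : ∀ n : ℕ, ∫ τ in a..b, τ ^ n * g τ = 0) :
    ∫ τ in a..b, g τ * g τ = 0 := by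
  rw [← uIcc_of_le hab] at hg
  obtain ⟨B, hB⟩ := isCompact_uIcc.exists_bound_of_continuousOn hg
  have happrox : ∀ δ > 0, |∫ τ in a..b, g τ * g τ| ≤ δ * B * |b - a| := by
    intro δ hδ
    obtain ⟨p, hp⟩ := exists_polynomial_near_of_continuousOn a b g (uIcc_of_le hab ▸ hg) δ hδ
    have hpg : IntervalIntegrable (fun τ => p.eval τ * g τ) volume a b :=
      (p.continuous.continuousOn.mul hg).intervalIntegrable
    have hgg : IntervalIntegrable (fun τ => g τ * g τ) volume a b :=
      (hg.mul hg).intervalIntegrable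
    rw [← sub_zero (∫ τ in a..b, g τ * g τ), ← integral_eval_mul_eq_zero_of_moments hg hm p,
      ← intervalIntegral.integral_sub hgg hpg, ← Real.norm_eq_abs]
    refine intervalIntegral.norm_integral_le_of_norm_le_const fun τ hτ => ?_
    have hτ' := uIoc_subset_uIcc hτ
    rw [← sub_mul, norm_mul, Real.norm_eq_abs, abs_sub_comm]
    exact mul_le_mul (hp τ (uIcc_of_le hab ▸ hτ')).le (hB τ hτ') (norm_nonneg _) hδ.le
  have hlim : Tendsto (fun δ : ℝ => δ * B * |b - a|) (𝓝[>] 0) (𝓝 0) :=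
    ((by fun_prop : Continuous fun δ : ℝ => δ * B * |b - a|).tendsto' 0 0 (by simp)).mono_left
      nhdsWithin_le_nhds
  exact abs_nonpos_iff.1 (ge_of_tendsto hlim (eventually_mem_nhdsWithin.mono happrox))

theorem eqOn_zero_of_integral_mul_self_eq_zero {g : ℝ → ℝ} {a b : ℝ} (hab : a < b)
    (hg : ContinuousOn g (Icc a b)) (h : ∫ τ in a..b, g τ * g τ = 0) :
    EqOn g 0 (Icc a b) := by
  rw [intervalIntegral.integral_eq_zero_iff_of_le_of_nonneg_ae hab.le
    (ae_of_all _ fun τ => mul_self_nonneg (g τ)) ((hg.mul hg).intervalIntegrable_of_Icc hab.le),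
    Measure.restrict_congr_set Ioc_ae_eq_Icc] at h
  have := Measure.eqOn_Icc_of_ae_eq volume hab.ne h (hg.mul hg) continuousOn_const
  exact fun τ hτ => mul_self_eq_zero.1 (this hτ)

theorem deriv_add_period {E : Type*} [NormedAddCommGroup E] [NormedSpace ℝ E] {f : ℝ → E}
    {T : ℝ} (hper : ∀ t, 0 ≤ t → f (t + T) = f t) {s : ℝ} (hs : 0 < s) :
    deriv f (s + T) = deriv f s := by
  rw [← deriv_comp_add_const]
  exact EventuallyEq.deriv_eq (eventually_gt_nhds hs |>.mono fun u hu => hper u hu.le)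

theorem intervalIntegrable_sub_rpow_neg_mul {q : ℝ} (hq : q < 1) {g : ℝ → ℝ} {a b : ℝ}
    (hg : ContinuousOn g (uIcc a b)) (x : ℝ) :
    IntervalIntegrable (fun τ => (x - τ) ^ (-q) * g τ) volume a b := by
  refine IntervalIntegrable.mul_continuousOn ?_ hg
  simpa using (intervalIntegral.intervalIntegrable_rpow' (r := -q) (a := x - a) (b := x - b)
    (by linarith)).comp_sub_left x

theorem caputo_add_period_sub {q T t : ℝ} (hq : q < 1) {f : ℝ → ℝ} (hf' : Continuous (deriv f))
    (hper : ∀ t, 0 ≤ t → f (t + T) = f t) (ht : 0 ≤ t) :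
    caputo q f (t + T) - caputo q f t =
      1 / Gamma (1 - q) * ∫ τ in (0:ℝ)..T, (t + T - τ) ^ (-q) * deriv f τ := by
  have hint := fun a b => intervalIntegrable_sub_rpow_neg_mul hq (a := a) (b := b)
    hf'.continuousOn (t + T)
  have hshift : ∫ τ in T..t + T, (t + T - τ) ^ (-q) * deriv f τ
      = ∫ τ in (0:ℝ)..t, (t - τ) ^ (-q) * deriv f τ := by
    have := intervalIntegral.integral_comp_add_right (a := 0) (b := t)
      (fun τ => (t + T - τ) ^ (-q) * deriv f τ) T
    rw [zero_add] at this
    rw [← this]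
    refine intervalIntegral.integral_congr_ae (ae_of_all _ fun s hs => ?_)
    rw [uIoc_of_le ht] at hs
    rw [deriv_add_period hper hs.1, add_sub_add_right_eq_sub]
  unfold caputo
  rw [← intervalIntegral.integral_add_adjacent_intervals (hint 0 T) (hint T (t + T)), hshift]
  ring

theorem integral_sub_rpow_mul_eq_zero_of_caputo_periodic {q T : ℝ} (hq : q < 1) {f : ℝ → ℝ}
    (hf' : Continuous (deriv f)) (hper : ∀ t, 0 ≤ t → f (t + T) = f t)
    (hP : ∀ t, 0 ≤ t → caputo q f (t + T) = caputo q f t) :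
    ∀ x, T ≤ x → ∫ τ in (0:ℝ)..T, (x - τ) ^ (-q) * deriv f τ = 0 := by
  intro x hx
  have h := caputo_add_period_sub hq hf' hper (sub_nonneg.2 hx)
  rw [hP _ (sub_nonneg.2 hx), sub_self, sub_add_cancel] at h
  exact (mul_eq_zero.1 h.symm).resolve_left (one_div_ne_zero (Gamma_pos_of_pos (by linarith)).ne')

theorem inv_sub_rpow_neg {ε τ : ℝ} (hε : 0 < ε) (hετ : ε * τ ≤ 1) (q : ℝ) :
    (ε⁻¹ - τ) ^ (-q) = ε ^ q * (1 / (1 - ε * τ) ^ q) := by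
  have h : ε⁻¹ - τ = ε⁻¹ * (1 - ε * τ) := by field_simp
  rw [h, mul_rpow (inv_nonneg.2 hε.le) (by linarith), inv_rpow hε.le, rpow_neg hε.le, inv_inv,
    rpow_neg (by linarith), one_div]

theorem eventually_integral_one_div_one_sub_mul_rpow_mul_eq_zero {q T : ℝ} (hT : 0 < T)
    {g : ℝ → ℝ} (h : ∀ x, T ≤ x → ∫ τ in (0:ℝ)..T, (x - τ) ^ (-q) * g τ = 0) :
    ∀ᶠ ε in 𝓝[>] 0, ∫ τ in (0:ℝ)..T, 1 / (1 - ε * τ) ^ q * g τ = 0 := by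
  filter_upwards [Ioo_mem_nhdsGT (inv_pos.2 hT)] with ε ⟨hε0, hεT⟩
  have hTε : T < ε⁻¹ := (lt_inv_comm₀ hε0 hT).1 hεT
  have hscale : ∫ τ in (0:ℝ)..T, (ε⁻¹ - τ) ^ (-q) * g τ
      = ε ^ q * ∫ τ in (0:ℝ)..T, 1 / (1 - ε * τ) ^ q * g τ := by
    rw [← intervalIntegral.integral_const_mul]
    refine intervalIntegral.integral_congr fun τ hτ => ?_
    rw [uIcc_of_le hT.le] at hτ
    have hετ : ε * τ ≤ 1 :=
      calc ε * τ ≤ ε * ε⁻¹ := by gcongr; exact hτ.2.trans hTε.le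
        _ = 1 := mul_inv_cancel₀ hε0.ne'
    simp only [inv_sub_rpow_neg hε0 hετ, mul_assoc]
  rw [h _ hTε.le] at hscale
  exact ((mul_eq_zero.1 hscale.symm).resolve_left (rpow_pos_of_pos hε0 q).ne')

theorem eq_of_periodic_of_forall_Ico {α : Type*} {f : ℝ → α} {T : ℝ} (hT : 0 < T)
    (hper : ∀ t, 0 ≤ t → f (t + T) = f t) {c : α} (h : ∀ t ∈ Ico 0 T, f t = c) :
    ∀ t, 0 ≤ t → f t = c := by
  have hiter : ∀ n : ℕ, ∀ s, 0 ≤ s → f (s + n * T) = f s := by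
    intro n
    induction n with
    | zero => simp
    | succ n ih =>
      intro s hs
      rw [Nat.cast_succ, add_one_mul, ← add_assoc, hper _ (by positivity), ih s hs]
  intro t ht
  set n := ⌊t / T⌋₊
  have hn : n * T ≤ t := (le_div_iff₀ hT).1 (Nat.floor_le (div_nonneg ht hT.le))
  have hn' : t < (n + 1) * T := (div_lt_iff₀ hT).1 (Nat.lt_floor_add_one _)
  rw [← sub_add_cancel t (n * T), hiter n _ (sub_nonneg.2 hn)]
  exact h _ ⟨sub_nonneg.2 hn, by linarith⟩

theorem caputo_of_periodic_not_periodic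
    (q T : ℝ) (hq0 : 0 < q) (hq1 : q < 1) (hT : 0 < T)
    (f : ℝ → ℝ) (hf : ContDiff ℝ 1 f)
    (hper : ∀ t : ℝ, 0 ≤ t → f (t + T) = f t)
    (hnc : ∃ s t : ℝ, 0 ≤ s ∧ 0 ≤ t ∧ f s ≠ f t) :
    ¬ (∀ t : ℝ, 0 ≤ t → caputo q f (t + T) = caputo q f t) := by
  intro hP
  have hg : Continuous (deriv f) := hf.continuous_deriv le_rfl
  have hmom : ∀ n : ℕ, ∫ τ in (0:ℝ)..T, τ ^ n * deriv f τ = 0 :=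
    moments_eq_zero_of_integral_comp_mul_eq_zero
      (one_div_one_sub_rpow_hasFPowerSeriesOnBall_zero q).hasFPowerSeriesAt
      (fun n => (Ring.choose_add_sub_one_pos hq0 n).ne') hg.continuousOn
      (eventually_integral_one_div_one_sub_mul_rpow_mul_eq_zero hT
        (integral_sub_rpow_mul_eq_zero_of_caputo_periodic hq1 hg hper hP))
  have hg0 : EqOn (deriv f) 0 (Icc 0 T) :=
    eqOn_zero_of_integral_mul_self_eq_zero hT hg.continuousOn
      (integral_mul_self_eq_zero_of_moments hT.le hg.continuousOn hmom)
  have hconst : ∀ t ∈ Icc 0 T, f t = f 0 :=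
    constant_of_has_deriv_right_zero hf.continuous.continuousOn fun t ht => by
      simpa [hg0 (Ico_subset_Icc_self ht)] using
        ((hf.differentiable one_ne_zero) t).hasDerivAt.hasDerivWithinAt
  have hall := eq_of_periodic_of_forall_Ico hT hper fun t ht => hconst t (Ico_subset_Icc_self ht)
  obtain ⟨s, t, hs, ht, hne⟩ := hnc
  exact hne ((hall s hs).trans (hall t ht).symm)
end

section
/- Let 0 < q < 1 and let x : [0,∞) → ℝⁿ be a continuously differentiable solution of the Caputo IVP D_*^q x = f(x), x(0) = x_0, with equilibrium x* (f(x*) = 0). If x is not identically equal to x*, then there is no finite time T > 0 such that x(t) = x* for all t ≥ T; i.e., the equilibrium cannot be finite-time stable. -/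
open MeasureTheory Real Filter

/-!
Suppose `x = x*` on `[T, ∞)` and let `y` be a component of `x`. Then `y' = 0` on `[T, ∞)`, and
since `f x* = 0` the Caputo equation says `∫₀ᵀ (t - τ)^(-q) y'(τ) dτ = 0` for every `t > T`.
Differentiating `k` times in `t` gives `∫₀ᵀ (t - τ)^(-q-k) y'(τ) dτ = 0`; at `t = T + 1` these are
the moments of `(T + 1 - τ)^(-q) y'(τ)` against the powers of the injective function
`(T + 1 - τ)⁻¹`. By Stone–Weierstrass the polynomials in an injective function are dense in
`C([0, T])`, so `y' = 0` on `[0, T]`, `y` is constant on `[0, ∞)`, and `x = x*` there.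
-/

open Set
open scoped Interval

theorem ContinuousMap.map_mul_self_eq_zero_of_forall_pow_mul {X : Type*} [TopologicalSpace X]
    [CompactSpace X] (Λ : C(X, ℝ) →L[ℝ] ℝ) {w ψ : C(X, ℝ)} (hw : Function.Injective w)
    (h : ∀ k : ℕ, Λ (w ^ k * ψ) = 0) : Λ (ψ * ψ) = 0 := by
  let ℓ : C(X, ℝ) →ₗ[ℝ] ℝ := Λ.toLinearMap ∘ₗ LinearMap.mulRight ℝ ψ
  have hclosed : IsClosed (LinearMap.ker ℓ : Set C(X, ℝ)) :=
    isClosed_eq (Λ.continuous.comp (continuous_id.mul continuous_const)) continuous_const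
  have hsep : (Algebra.adjoin ℝ {w}).SeparatesPoints := fun x y hxy =>
    ⟨w, ⟨w, Algebra.self_mem_adjoin_singleton ℝ w, rfl⟩, fun h => hxy (hw h)⟩
  have hadjoin : Subalgebra.toSubmodule (Algebra.adjoin ℝ {w}) ≤ LinearMap.ker ℓ := by
    rw [Algebra.adjoin_eq_span, ← Submonoid.powers_eq_closure, Submodule.span_le]
    rintro _ ⟨k, rfl⟩
    exact h k
  have hdense := ContinuousMap.subalgebra_topologicalClosure_eq_top_of_separatesPoints _ hsep
  have hψ : ψ ∈ (Algebra.adjoin ℝ {w}).topologicalClosure := hdense ▸ Algebra.mem_top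
  exact hclosed.closure_subset_iff.2 hadjoin hψ

noncomputable def intervalIntegralCLM {a b : ℝ} (hab : a ≤ b) : C(Icc a b, ℝ) →L[ℝ] ℝ where
  toFun g := ∫ τ in a..b, g (projIcc a b hab τ)
  map_add' g h := intervalIntegral.integral_add
    ((g.continuous.comp continuous_projIcc).intervalIntegrable _ _)
    ((h.continuous.comp continuous_projIcc).intervalIntegrable _ _)
  map_smul' c g := intervalIntegral.integral_smul c _
  cont := intervalIntegral.continuous_parametric_intervalIntegral_of_continuous'
    (f := fun (g : C(Icc a b, ℝ)) τ => g (projIcc a b hab τ)) (by fun_prop) a b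

theorem intervalIntegralCLM_mk {a b : ℝ} (hab : a ≤ b) {g : ℝ → ℝ} (hg : ContinuousOn g (Icc a b)) :
    intervalIntegralCLM hab ⟨(Icc a b).domRestrict g, hg.domRestrict⟩ = ∫ τ in a..b, g τ := by
  refine intervalIntegral.integral_congr fun τ hτ => ?_
  rw [uIcc_of_le hab] at hτ
  simp [projIcc_of_mem hab hτ]

theorem eqOn_zero_of_intervalIntegral_mul_self_eq_zero {a b : ℝ} (hab : a < b) {ψ : ℝ → ℝ}
    (hψ : ContinuousOn ψ (Icc a b)) (h : ∫ τ in a..b, ψ τ * ψ τ = 0) : EqOn ψ 0 (Icc a b) := by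
  have hint : IntervalIntegrable (fun τ => ψ τ * ψ τ) volume a b :=
    (hψ.mul hψ).intervalIntegrable_of_Icc hab.le
  rw [intervalIntegral.integral_eq_zero_iff_of_le_of_nonneg_ae hab.le
    (ae_of_all _ fun τ => mul_self_nonneg (ψ τ)) hint,
    Measure.restrict_congr_set Ioc_ae_eq_Icc] at h
  intro τ hτ
  exact mul_self_eq_zero.1
    (Measure.eqOn_Icc_of_ae_eq volume hab.ne h (hψ.mul hψ) continuousOn_const hτ)

theorem eqOn_zero_of_forall_intervalIntegral_pow_mul_eq_zero {a b : ℝ} (hab : a < b)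
    {w ψ : ℝ → ℝ} (hw : ContinuousOn w (Icc a b)) (hw_inj : InjOn w (Icc a b))
    (hψ : ContinuousOn ψ (Icc a b)) (h : ∀ k : ℕ, ∫ τ in a..b, w τ ^ k * ψ τ = 0) :
    EqOn ψ 0 (Icc a b) := by
  refine eqOn_zero_of_intervalIntegral_mul_self_eq_zero hab hψ ?_
  rw [← intervalIntegralCLM_mk hab.le (g := fun τ => ψ τ * ψ τ) (hψ.mul hψ)]
  refine ContinuousMap.map_mul_self_eq_zero_of_forall_pow_mul (intervalIntegralCLM hab.le)
    (w := ⟨_, hw.domRestrict⟩) (ψ := ⟨_, hψ.domRestrict⟩) hw_inj.injective fun k => ?_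
  rw [← h k, ← intervalIntegralCLM_mk hab.le (g := fun τ => w τ ^ k * ψ τ) ((hw.pow k).mul hψ)]
  rfl

theorem hasDerivAt_intervalIntegral_rpow_sub_mul {a b t r : ℝ} (hab : a ≤ b) (hbt : b < t)
    (hr : r ≤ 1) {φ : ℝ → ℝ} (hφ : IntervalIntegrable φ volume a b) :
    HasDerivAt (fun s => ∫ τ in a..b, (s - τ) ^ r * φ τ)
      (∫ τ in a..b, r * (t - τ) ^ (r - 1) * φ τ) t := by
  set ε := (t - b) / 2
  have hε : 0 < ε := by simp only [ε]; linarith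
  have ht : t ∈ Ioi (b + ε) := by simp only [ε, mem_Ioi]; linarith
  have hgap : ∀ s ∈ Ioi (b + ε), ∀ τ ≤ b, ε < s - τ := fun s hs τ hτ => by
    linarith [mem_Ioi.1 hs]
  have hcont : ∀ s ∈ Ioi (b + ε), ∀ r' : ℝ, ContinuousOn (fun τ => (s - τ) ^ r') [[a, b]] :=
    fun s hs r' => (continuousOn_const.sub continuousOn_id).rpow_const fun τ hτ =>
      Or.inl (hε.trans (hgap s hs τ (uIcc_of_le hab ▸ hτ).2)).ne'
  refine (intervalIntegral.hasDerivAt_integral_of_dominated_loc_of_deriv_le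
    (F := fun s τ => (s - τ) ^ r * φ τ) (F' := fun s τ => r * (s - τ) ^ (r - 1) * φ τ)
    (bound := fun τ => |r| * ε ^ (r - 1) * |φ τ|) (s := Ioi (b + ε)) (isOpen_Ioi.mem_nhds ht)
    ?_ ?_ ?_ ?_ ?_ ?_).2
  · filter_upwards [isOpen_Ioi.mem_nhds ht] with s hs
    exact (hφ.continuousOn_mul (hcont s hs r)).def'.aestronglyMeasurable
  · exact hφ.continuousOn_mul (hcont t ht r)
  · exact (hφ.continuousOn_mul
      (continuousOn_const.mul (hcont t ht (r - 1)))).def'.aestronglyMeasurable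
  · refine ae_of_all _ fun τ hτ s hs => ?_
    have hsτ := hgap s hs τ (uIoc_of_le hab ▸ hτ).2
    rw [norm_mul, norm_mul, Real.norm_eq_abs, Real.norm_eq_abs, Real.norm_eq_abs,
      abs_of_pos (rpow_pos_of_pos (hε.trans hsτ) _)]
    have := rpow_le_rpow_of_nonpos hε hsτ.le (by linarith : r - 1 ≤ 0)
    gcongr
  · exact hφ.norm.const_mul _
  · refine ae_of_all _ fun τ hτ s hs => ?_
    have hsτ := hgap s hs τ (uIoc_of_le hab ▸ hτ).2
    simpa using (((hasDerivAt_id s).sub_const τ).rpow_const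
      (Or.inl (hε.trans hsτ).ne')).mul_const (φ τ)

theorem intervalIntegral_rpow_sub_mul_eq_zero_of_add_nat {a b p : ℝ} (hab : a ≤ b) (hp : 0 < p)
    {φ : ℝ → ℝ} (hφ : IntervalIntegrable φ volume a b)
    (h : ∀ t, b < t → ∫ τ in a..b, (t - τ) ^ (-p) * φ τ = 0) (k : ℕ) :
    ∀ t, b < t → ∫ τ in a..b, (t - τ) ^ (-(p + k)) * φ τ = 0 := by
  induction k with
  | zero => simpa using h
  | succ k ih =>
    intro t ht
    have hpk : p + k ≠ 0 := by positivity
    have hzero : HasDerivAt (fun s => ∫ τ in a..b, (s - τ) ^ (-(p + k)) * φ τ) 0 t :=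
      (hasDerivAt_const t 0).congr_of_eventuallyEq (eventually_of_mem (Ioi_mem_nhds ht) ih)
    have hderiv := (hasDerivAt_intervalIntegral_rpow_sub_mul hab ht (by linarith) hφ).unique hzero
    simp_rw [mul_assoc, intervalIntegral.integral_const_mul, mul_eq_zero, neg_eq_zero,
      hpk, false_or] at hderiv
    rwa [Nat.cast_succ, ← add_assoc, neg_add']

theorem eqOn_zero_of_intervalIntegral_rpow_sub_mul_eq_zero {a b p : ℝ} (hab : a < b) (hp : 0 < p)
    {φ : ℝ → ℝ} (hφ : ContinuousOn φ (Icc a b))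
    (h : ∀ t, b < t → ∫ τ in a..b, (t - τ) ^ (-p) * φ τ = 0) : EqOn φ 0 (Icc a b) := by
  have hpos : ∀ τ ∈ Icc a b, 0 < b + 1 - τ := fun τ hτ => by linarith [hτ.2]
  have hbase : ContinuousOn (fun τ => b + 1 - τ) (Icc a b) := by fun_prop
  have hmoments : ∀ k : ℕ,
      ∫ τ in a..b, (b + 1 - τ)⁻¹ ^ k * ((b + 1 - τ) ^ (-p) * φ τ) = 0 := fun k => by
    rw [← intervalIntegral_rpow_sub_mul_eq_zero_of_add_nat hab.le hp
      (hφ.intervalIntegrable_of_Icc hab.le) h k (b + 1) (by linarith)]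
    refine intervalIntegral.integral_congr fun τ hτ => ?_
    have hτ := hpos τ (uIcc_of_le hab.le ▸ hτ)
    rw [neg_add, rpow_add hτ, rpow_neg hτ.le (k : ℝ), rpow_natCast, inv_pow]
    ring
  have hweight_inj : InjOn (fun τ => (b + 1 - τ)⁻¹) (Icc a b) := fun τ _ τ' _ h => by
    simpa using h
  have hψ := eqOn_zero_of_forall_intervalIntegral_pow_mul_eq_zero hab
    (hbase.inv₀ fun τ hτ => (hpos τ hτ).ne') hweight_inj
    ((hbase.rpow_const fun τ hτ => Or.inl (hpos τ hτ).ne').mul hφ) hmoments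
  intro τ hτ
  exact (mul_eq_zero.1 (hψ hτ)).resolve_left (rpow_pos_of_pos (hpos τ hτ) _).ne'

theorem deriv_eqOn_zero_of_eqOn_const {y : ℝ → ℝ} {s : Set ℝ} {c : ℝ} (hs : UniqueDiffOn ℝ s)
    (hy : ∀ x ∈ s, DifferentiableAt ℝ y x) (hc : EqOn y (fun _ => c) s) : EqOn (deriv y) 0 s :=
  fun x hx => (hs x hx).eq_deriv _ (hy x hx).hasDerivAt.hasDerivWithinAt
    ((hasDerivWithinAt_const x s c).congr hc (hc hx))

theorem intervalIntegral_eq_of_eqOn_zero {g : ℝ → ℝ} {a b c : ℝ}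
    (hg : IntervalIntegrable g volume a b) (h : EqOn g 0 [[b, c]]) :
    ∫ τ in a..c, g τ = ∫ τ in a..b, g τ := by
  have hbc : IntervalIntegrable g volume b c := intervalIntegrable_const.congr
    fun τ hτ => (h (uIoc_subset_uIcc hτ)).symm
  rw [← intervalIntegral.integral_add_adjacent_intervals hg hbc, intervalIntegral.integral_congr h]
  simp

theorem eqOn_const_of_caputo_eq_zero {q T c : ℝ} (hq0 : 0 < q) (hq1 : q < 1) (hT : 0 < T)
    {y : ℝ → ℝ} (hy : ContDiff ℝ 1 y) (hc : EqOn y (fun _ => c) (Ici T))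
    (hcaputo : ∀ t, T < t → caputo q y t = 0) : EqOn y (fun _ => c) (Ici 0) := by
  have hdiff : Differentiable ℝ y := hy.differentiable one_ne_zero
  have hy' : Continuous (deriv y) := hy.continuous_deriv le_rfl
  have htail : EqOn (deriv y) 0 (Ici T) :=
    deriv_eqOn_zero_of_eqOn_const (uniqueDiffOn_Ici T) (fun x _ => hdiff x) hc
  have hhead : ∀ t, T < t → ∫ τ in (0:ℝ)..T, (t - τ) ^ (-q) * deriv y τ = 0 := by
    intro t ht
    have hΓ : 1 / Gamma (1 - q) ≠ 0 := one_div_ne_zero (Gamma_pos_of_pos (by linarith)).ne'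
    have hint : IntervalIntegrable (fun τ => (t - τ) ^ (-q) * deriv y τ) volume 0 T :=
      ContinuousOn.intervalIntegrable (((continuousOn_const.sub continuousOn_id).rpow_const
        fun τ hτ => Or.inl (sub_pos.2 ((uIcc_of_le hT.le ▸ hτ).2.trans_lt ht)).ne').mul
          hy'.continuousOn)
    rw [← intervalIntegral_eq_of_eqOn_zero hint (c := t) fun τ hτ => ?_]
    · exact (mul_eq_zero.1 (hcaputo t ht)).resolve_left hΓ
    · rw [uIcc_of_le ht.le] at hτ
      simp [htail hτ.1]
  have hzero : EqOn (deriv y) 0 (Ici 0) := fun τ hτ => (le_total τ T).elim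
    (fun hτT => eqOn_zero_of_intervalIntegral_rpow_sub_mul_eq_zero hT hq0 hy'.continuousOn hhead
      ⟨hτ, hτT⟩) fun hTτ => htail hTτ
  have hderiv : ∀ τ ∈ Ici (0 : ℝ), HasDerivAt y 0 τ := fun τ hτ => by
    simpa [hzero hτ] using (hdiff τ).hasDerivAt
  intro t ht
  have hFTC := intervalIntegral.integral_eq_sub_of_hasDerivAt
    (fun τ hτ => hderiv τ (le_trans (le_min ht hT.le) hτ.1)) (intervalIntegrable_const (c := 0))
  rw [intervalIntegral.integral_zero, hc (le_refl T)] at hFTC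
  linarith

theorem caputo_no_finite_time_stability_general
    (n : ℕ) (q : ℝ) (hq0 : 0 < q) (hq1 : q < 1)
    (f : (Fin n → ℝ) → (Fin n → ℝ))
    (xstar : Fin n → ℝ) (heq : f xstar = 0)
    (x : ℝ → Fin n → ℝ) (hx : ContDiff ℝ 1 x)
    (hivp : ∀ t : ℝ, 0 ≤ t → ∀ i, caputo q (fun s => x s i) t = f (x t) i)
    (hne : ∃ t : ℝ, 0 ≤ t ∧ x t ≠ xstar) :
    ¬ ∃ T : ℝ, 0 < T ∧ ∀ t : ℝ, T ≤ t → x t = xstar := by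
  rintro ⟨T, hT, hstab⟩
  obtain ⟨t₀, ht₀, hne⟩ := hne
  refine hne (funext fun i => eqOn_const_of_caputo_eq_zero hq0 hq1 hT (contDiff_pi.1 hx i)
    (fun t ht => congrFun (hstab t ht) i) (fun t ht => ?_) ht₀)
  rw [hivp t (hT.trans ht).le i, hstab t ht.le, heq, Pi.zero_apply]

theorem caputo_no_finite_time_stability
    (n : ℕ) (q : ℝ) (hq0 : 0 < q) (hq1 : q < 1)
    (f : (Fin n → ℝ) → (Fin n → ℝ)) (hf : Continuous f)
    (xstar x0 : Fin n → ℝ) (heq : f xstar = 0)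
    (x : ℝ → Fin n → ℝ) (hx : ContDiff ℝ 1 x)
    (hivp : ∀ t : ℝ, 0 ≤ t → ∀ i, caputo q (fun s => x s i) t = f (x t) i)
    (hinit : x 0 = x0)
    (hne : ∃ t : ℝ, 0 ≤ t ∧ x t ≠ xstar) :
    ¬ ∃ T : ℝ, 0 < T ∧ ∀ t : ℝ, T ≤ t → x t = xstar :=
  caputo_no_finite_time_stability_general n q hq0 hq1 f xstar heq x hx hivp hne
end

section
/- If 0 < q < 1 and f : [0,∞) → ℝ is continuously differentiable with f constant on [T,∞) for some T > 0, then the Caputo derivative D_*^q f(t) = (1/Γ(1-q)) ∫_0^t (t-τ)^{-q} f'(τ) dτ tends to 0 as t → ∞ but is not identically zero on [T,∞) unless f is constant on [0,∞). -/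
open MeasureTheory Real Filter

/-!
For `t > T` the Caputo integral only runs over `[0, T]`, where `t - τ ≥ t - T`, so it is
`O((t - T)^(-q))`. If it vanishes for all `t > T`, differentiating `n` times in `t` shows that
`∫₀ᵀ (t - τ)^(-q-n) f'(τ) dτ = 0` for every `n`. At `t = T + 1` these are the moments of
`(T + 1 - τ)^(-q) f'(τ)` against the powers of the injective function `τ ↦ (T + 1 - τ)⁻¹`;
polynomials in an injective continuous function are dense by Stone–Weierstrass, so `f' = 0`
on `[0, T]`.
-/

open Set Topology Polynomial

lemma deriv_eq_zero_of_forall_ge {f : ℝ → ℝ} {T τ : ℝ} (hf : DifferentiableAt ℝ f τ)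
    (hconst : ∀ t, T ≤ t → f t = f T) (hτ : T ≤ τ) : deriv f τ = 0 :=
  (uniqueDiffOn_Ici T τ hτ).eq_deriv _ hf.hasDerivAt.hasDerivWithinAt
    ((hasDerivWithinAt_const τ (Ici T) (f T)).congr (fun t ht => hconst t ht) (hconst τ hτ))

lemma exists_polynomial_comp_near {a b ε : ℝ} {φ w : ℝ → ℝ} (hφ : ContinuousOn φ (Icc a b))
    (hinj : InjOn φ (Icc a b)) (hw : ContinuousOn w (Icc a b)) (hε : 0 < ε) :
    ∃ p : ℝ[X], ∀ x ∈ Icc a b, |p.eval (φ x) - w x| < ε := by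
  let φ' : C(Icc a b, ℝ) := ⟨(Icc a b).domRestrict φ, hφ.domRestrict⟩
  have hsep : (aeval φ').range.SeparatesPoints := fun x y hxy =>
    ⟨φ', ⟨φ', ⟨(X : ℝ[X]), aeval_X φ'⟩, rfl⟩, fun h => hxy (Subtype.ext (hinj x.2 y.2 h))⟩
  obtain ⟨⟨_, p, rfl⟩, hp⟩ := ContinuousMap.exists_mem_subalgebra_near_continuous_of_separatesPoints
    _ hsep _ hw.domRestrict ε hε
  exact ⟨p, fun x hx => by simpa [φ'] using hp ⟨x, hx⟩⟩

lemma integral_eval_comp_mul_eq_zero {a b : ℝ} {φ w : ℝ → ℝ} (hab : a ≤ b)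
    (hφ : ContinuousOn φ (Icc a b)) (hw : ContinuousOn w (Icc a b))
    (h : ∀ n : ℕ, ∫ x in a..b, φ x ^ n * w x = 0) (p : ℝ[X]) :
    ∫ x in a..b, p.eval (φ x) * w x = 0 := by
  simp_rw [eval_eq_sum_range, Finset.sum_mul, mul_assoc]
  rw [intervalIntegral.integral_finsetSum fun n _ =>
    (continuousOn_const.mul ((hφ.pow n).mul hw)).intervalIntegrable_of_Icc
      (u := fun x => p.coeff n * (φ x ^ n * w x)) hab]
  simp [intervalIntegral.integral_const_mul, h]

lemma eqOn_zero_of_integral_pow_comp_mul_eq_zero {a b : ℝ} {φ w : ℝ → ℝ} (hab : a < b)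
    (hφ : ContinuousOn φ (Icc a b)) (hinj : InjOn φ (Icc a b)) (hw : ContinuousOn w (Icc a b))
    (h : ∀ n : ℕ, ∫ x in a..b, φ x ^ n * w x = 0) : EqOn w 0 (Icc a b) := by
  have hsmall : ∀ ε > 0, ∫ x in a..b, w x * w x ≤ ε * ∫ x in a..b, |w x| := by
    intro ε hε
    obtain ⟨p, hp⟩ := exists_polynomial_comp_near hφ hinj hw hε
    have hww : IntervalIntegrable (fun x => w x * w x) volume a b :=
      (hw.mul hw).intervalIntegrable_of_Icc hab.le
    have hpw : IntervalIntegrable (fun x => p.eval (φ x) * w x) volume a b :=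
      ((p.continuous.comp_continuousOn hφ).mul hw).intervalIntegrable_of_Icc hab.le
    calc ∫ x in a..b, w x * w x
        = ∫ x in a..b, (w x - p.eval (φ x)) * w x := by
          simp_rw [sub_mul]
          rw [intervalIntegral.integral_sub hww hpw,
            integral_eval_comp_mul_eq_zero hab.le hφ hw h, sub_zero]
      _ ≤ ‖∫ x in a..b, (w x - p.eval (φ x)) * w x‖ := le_abs_self _
      _ ≤ ∫ x in a..b, ε * |w x| := by
          refine intervalIntegral.norm_integral_le_of_norm_le hab.le (ae_of_all _ fun x hx => ?_)
            ((continuousOn_const.mul hw.abs).intervalIntegrable_of_Icc hab.le)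
          rw [norm_mul, Real.norm_eq_abs, Real.norm_eq_abs, abs_sub_comm]
          exact mul_le_mul_of_nonneg_right (hp x (Ioc_subset_Icc_self hx)).le (abs_nonneg _)
      _ = ε * ∫ x in a..b, |w x| := intervalIntegral.integral_const_mul _ _
  have hnonpos : ∫ x in a..b, w x * w x ≤ 0 := by
    have hlim : Tendsto (fun ε : ℝ => ε * ∫ x in a..b, |w x|) (𝓝[>] 0) (𝓝 0) :=
      ((continuous_id.mul continuous_const).tendsto' 0 0 (zero_mul _)).mono_left
        nhdsWithin_le_nhds
    exact ge_of_tendsto hlim (eventually_nhdsWithin_of_forall hsmall)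
  intro x hx
  by_contra hwx
  have := intervalIntegral.integral_pos (f := fun y => w y * w y) hab (hw.mul hw)
    (fun y _ => mul_self_nonneg (w y)) ⟨x, hx, mul_self_pos.2 hwx⟩
  linarith

noncomputable def rpowSubIntegral (a b c : ℝ) (g : ℝ → ℝ) (x : ℝ) : ℝ :=
  ∫ τ in a..b, (x - τ) ^ c * g τ

section rpowSubIntegral

variable {a b c x : ℝ} {g : ℝ → ℝ}

lemma continuousOn_rpow_sub_mul (hg : ContinuousOn g (Icc a b)) (hx : b < x) :
    ContinuousOn (fun τ => (x - τ) ^ c * g τ) (Icc a b) :=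
  ((continuousOn_const.sub continuousOn_id).rpow_const
    fun _ hτ => Or.inl (sub_pos.2 (hτ.2.trans_lt hx)).ne').mul hg

lemma intervalIntegrable_rpow_sub_mul (hab : a ≤ b) (hg : ContinuousOn g (Icc a b))
    (hx : b < x) : IntervalIntegrable (fun τ => (x - τ) ^ c * g τ) volume a b :=
  (continuousOn_rpow_sub_mul hg hx).intervalIntegrable_of_Icc hab

lemma rpowSubIntegral_eq_of_forall_ge (hab : a ≤ b) (hg : ContinuousOn g (Icc a b))
    (hx : b < x) (hg0 : ∀ τ, b ≤ τ → g τ = 0) :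
    rpowSubIntegral a x c g x = rpowSubIntegral a b c g x := by
  have hzero : EqOn (fun τ => (x - τ) ^ c * g τ) 0 (uIcc b x) := fun τ hτ => by
    simp [hg0 τ (uIcc_of_le hx.le ▸ hτ).1]
  rw [rpowSubIntegral, ← intervalIntegral.integral_add_adjacent_intervals
    (intervalIntegrable_rpow_sub_mul hab hg hx)
    ((continuousOn_const.congr hzero).intervalIntegrable), intervalIntegral.integral_congr hzero]
  simp [rpowSubIntegral]

lemma tendsto_rpowSubIntegral_atTop (hc : c < 0) (hab : a ≤ b)
    (hg : ContinuousOn g (Icc a b)) : Tendsto (rpowSubIntegral a b c g) atTop (𝓝 0) := by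
  have hbound : ∀ x, b < x →
      ‖rpowSubIntegral a b c g x‖ ≤ (x - b) ^ c * ∫ τ in a..b, |g τ| := by
    intro x hx
    rw [← intervalIntegral.integral_const_mul]
    refine intervalIntegral.norm_integral_le_of_norm_le hab (ae_of_all _ fun τ hτ => ?_)
      ((continuousOn_const.mul hg.abs).intervalIntegrable_of_Icc hab)
    rw [norm_mul, Real.norm_eq_abs, Real.norm_eq_abs,
      abs_of_nonneg (Real.rpow_nonneg (by linarith [hτ.2]) _)]
    exact mul_le_mul_of_nonneg_right
      (Real.rpow_le_rpow_of_nonpos (by linarith) (by linarith [hτ.2]) hc.le) (abs_nonneg _)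
  have hdecay : Tendsto (fun x => (x - b) ^ c * ∫ τ in a..b, |g τ|) atTop (𝓝 0) := by
    have := (tendsto_rpow_neg_atTop (neg_pos.2 hc)).comp
      (tendsto_atTop_add_const_right _ (-b) tendsto_id)
    simpa [Function.comp_def, ← sub_eq_add_neg] using this.mul_const (∫ τ in a..b, |g τ|)
  exact squeeze_zero_norm' ((eventually_gt_atTop b).mono hbound) hdecay

lemma hasDerivAt_rpowSubIntegral (hab : a ≤ b) (hg : ContinuousOn g (Icc a b)) (hx : b < x) :
    HasDerivAt (rpowSubIntegral a b c g) (c * rpowSubIntegral a b (c - 1) g x) x := by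
  set δ := (x - b) / 2 with hδ
  have hδ0 : 0 < δ := by linarith
  have hsep : ∀ y ∈ Metric.closedBall x δ, ∀ τ ∈ Icc a b, δ ≤ y - τ := fun y hy τ hτ => by
    have := (abs_le.1 (Metric.mem_closedBall.1 hy)).1
    linarith [hτ.2]
  obtain ⟨M, hM⟩ := ((isCompact_closedBall x δ).prod isCompact_Icc).exists_bound_of_continuousOn
    (f := fun p : ℝ × ℝ => (p.1 - p.2) ^ (c - 1) * g p.2)
    (((continuousOn_fst.sub continuousOn_snd).rpow_const fun p hp =>
      Or.inl (hδ0.trans_le (hsep p.1 hp.1 p.2 hp.2)).ne').mul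
      (hg.comp continuousOn_snd fun p hp => hp.2))
  have hIoc : uIoc a b ⊆ Icc a b := uIoc_of_le hab ▸ Ioc_subset_Icc_self
  have key := intervalIntegral.hasDerivAt_integral_of_dominated_loc_of_deriv_le
    (F := fun y τ => (y - τ) ^ c * g τ) (F' := fun y τ => c * ((y - τ) ^ (c - 1) * g τ))
    (bound := fun _ => |c| * M) (Metric.ball_mem_nhds x hδ0)
    (eventually_gt_nhds hx |>.mono fun y hy =>
      (intervalIntegrable_rpow_sub_mul hab hg hy).def'.aestronglyMeasurable)
    (intervalIntegrable_rpow_sub_mul hab hg hx)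
    ((intervalIntegrable_rpow_sub_mul hab hg hx).def'.aestronglyMeasurable.const_mul c)
    (ae_of_all _ fun τ hτ y hy => by
      rw [norm_mul, Real.norm_eq_abs]
      exact mul_le_mul_of_nonneg_left
        (hM (y, τ) ⟨Metric.ball_subset_closedBall hy, hIoc hτ⟩) (abs_nonneg c))
    intervalIntegrable_const
    (ae_of_all _ fun τ hτ y hy => by
      have hpos := hδ0.trans_le (hsep y (Metric.ball_subset_closedBall hy) τ (hIoc hτ))
      exact ((((hasDerivAt_id' y).sub_const τ).rpow_const (Or.inl hpos.ne')).mul_const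
        (g τ)).congr_deriv (by ring))
  rw [rpowSubIntegral, ← intervalIntegral.integral_const_mul]
  exact key.2

lemma rpowSubIntegral_sub_natCast_eq_zero (hab : a ≤ b) (hg : ContinuousOn g (Icc a b))
    (hc : ∀ k : ℕ, c ≠ k) (h : ∀ x, b < x → rpowSubIntegral a b c g x = 0) (n : ℕ) :
    ∀ x, b < x → rpowSubIntegral a b (c - n) g x = 0 := by
  induction n with
  | zero => simpa using h
  | succ n ih =>
    intro x hx
    have hderiv := hasDerivAt_rpowSubIntegral (c := c - n) hab hg hx
    have hzero : HasDerivAt (rpowSubIntegral a b (c - n) g) 0 x :=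
      (hasDerivAt_const x 0).congr_of_eventuallyEq (eventually_gt_nhds hx |>.mono ih)
    have := hderiv.unique hzero
    rw [mul_eq_zero, sub_eq_zero] at this
    push_cast
    rw [← sub_sub]
    exact this.resolve_left (hc n)

lemma eqOn_zero_of_forall_rpowSubIntegral_eq_zero (hab : a < b)
    (hg : ContinuousOn g (Icc a b)) (hc : ∀ k : ℕ, c ≠ k)
    (h : ∀ x, b < x → rpowSubIntegral a b c g x = 0) :
    EqOn g 0 (Icc a b) := by
  have hpos : ∀ τ ∈ Icc a b, 0 < b + 1 - τ := fun τ hτ => by linarith [hτ.2]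
  have hw : EqOn (fun τ => (b + 1 - τ) ^ c * g τ) 0 (Icc a b) := by
    refine eqOn_zero_of_integral_pow_comp_mul_eq_zero (φ := fun τ => (b + 1 - τ)⁻¹) hab
      ((continuousOn_const.sub continuousOn_id).inv₀ fun τ hτ => (hpos τ hτ).ne')
      (fun τ _ σ _ hτσ => by simpa using hτσ) (continuousOn_rpow_sub_mul hg (lt_add_one b))
      fun n => ?_
    rw [← rpowSubIntegral_sub_natCast_eq_zero hab.le hg hc h n (b + 1) (lt_add_one b)]
    refine intervalIntegral.integral_congr fun τ hτ => ?_
    rw [uIcc_of_le hab.le] at hτ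
    rw [Real.rpow_sub (hpos τ hτ), Real.rpow_natCast, inv_pow]
    ring
  intro τ hτ
  simpa [(Real.rpow_pos_of_pos (hpos τ hτ) c).ne'] using hw hτ

end rpowSubIntegral

theorem caputo_eventually_constant
    (q T : ℝ) (hq0 : 0 < q) (hq1 : q < 1) (hT : 0 < T)
    (f : ℝ → ℝ) (hf : ContDiff ℝ 1 f)
    (hconst : ∀ t : ℝ, T ≤ t → f t = f T) :
    Tendsto (caputo q f) atTop (nhds 0) ∧
      (¬ (∀ t : ℝ, 0 ≤ t → f t = f 0) → ¬ ∀ t : ℝ, T ≤ t → caputo q f t = 0) := by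
  have hdiff : Differentiable ℝ f := hf.differentiable one_ne_zero
  have hderiv_Ici : ∀ τ, T ≤ τ → deriv f τ = 0 := fun τ =>
    deriv_eq_zero_of_forall_ge (hdiff τ) hconst
  have hg : ContinuousOn (deriv f) (Icc 0 T) := (hf.continuous_deriv le_rfl).continuousOn
  have hcaputo : ∀ t, T < t →
      caputo q f t = 1 / Gamma (1 - q) * rpowSubIntegral 0 T (-q) (deriv f) t :=
    fun t ht => congrArg _ (rpowSubIntegral_eq_of_forall_ge hT.le hg ht hderiv_Ici)
  refine ⟨?_, fun hnot_const hcaputo_zero => hnot_const fun t ht => ?_⟩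
  · have := (tendsto_rpowSubIntegral_atTop (neg_lt_zero.2 hq0) hT.le hg).const_mul
      (1 / Gamma (1 - q))
    rw [mul_zero] at this
    exact this.congr' ((eventually_gt_atTop T).mono fun t ht => (hcaputo t ht).symm)
  have hΓ : 1 / Gamma (1 - q) ≠ 0 := one_div_ne_zero (Gamma_pos_of_pos (by linarith)).ne'
  have hderiv_Icc : EqOn (deriv f) 0 (Icc 0 T) :=
    eqOn_zero_of_forall_rpowSubIntegral_eq_zero hT hg
      (fun k => (neg_lt_zero.2 hq0).trans_le (Nat.cast_nonneg k) |>.ne)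
      fun x hx =>
        (mul_eq_zero.1 ((hcaputo x hx).symm.trans (hcaputo_zero x hx.le))).resolve_left hΓ
  refine constant_of_has_deriv_right_zero hdiff.continuous.continuousOn (fun x hx => ?_) t
    ⟨ht, le_rfl⟩
  have h0 : deriv f x = 0 := (le_total x T).elim (fun h => hderiv_Icc ⟨hx.1, h⟩) (hderiv_Ici x)
  exact h0 ▸ (hdiff x).hasDerivAt.hasDerivWithinAt
end

section
/- If x : [0,∞) → ℝ is continuously differentiable and T-periodic with 0 < q < 1, where D_*^q x(t+T) = (1/Γ(1−q)) ∫_0^{t+T}(t+T−τ)^{−q} x'(τ) dτ, then D_*^q x(t+T) − D_*^q x(t) = (1/Γ(1−q)) ∫_0^T (t+T−τ)^{−q} x'(τ) dτ. -/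
open MeasureTheory Real Filter

lemma ker_integrable {q : ℝ} (hq : q < 1) {g : ℝ → ℝ} (hg : Continuous g)
    (c a b : ℝ) :
    IntervalIntegrable (fun τ => (c - τ) ^ (-q) * g τ) volume a b := by
  have h1 : IntervalIntegrable (fun τ : ℝ => τ ^ (-q)) volume (c - a) (c - b) :=
    intervalIntegral.intervalIntegrable_rpow' (by linarith)
  exact ((h1.comp_sub_left c).mono_set (by simp [Set.uIcc_comm])).mul_continuousOn
    hg.continuousOn

theorem caputo_periodic_defect
    (q T : ℝ) (hq0 : 0 < q) (hq1 : q < 1) (hT : 0 < T)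
    (x : ℝ → ℝ) (hx : ContDiff ℝ 1 x)
    (hper : ∀ t : ℝ, 0 ≤ t → x (t + T) = x t) :
    ∀ t : ℝ, 0 ≤ t →
      caputo q x (t + T) - caputo q x t
        = (1 / Real.Gamma (1 - q)) * ∫ τ in (0:ℝ)..T, (t + T - τ) ^ (-q) * deriv x τ := by
  intro t ht
  set g := deriv x with hgdef
  have hgc : Continuous g := hx.continuous_deriv le_rfl
  -- periodicity of the derivative on (0, ∞)
  have hgper : ∀ s : ℝ, 0 < s → g (s + T) = g s := by
    intro s hs
    have heq : (fun u => x (u + T)) =ᶠ[nhds s] x := by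
      filter_upwards [eventually_gt_nhds hs] with u hu using hper u hu.le
    calc g (s + T) = deriv (fun u => x (u + T)) s := (deriv_comp_add_const x T s).symm
      _ = deriv x s := heq.deriv_eq
  -- split the integral
  have hI1 : IntervalIntegrable (fun τ => (t + T - τ) ^ (-q) * g τ) volume 0 T :=
    ker_integrable hq1 hgc _ _ _
  have hI2 : IntervalIntegrable (fun τ => (t + T - τ) ^ (-q) * g τ) volume T (t + T) :=
    ker_integrable hq1 hgc _ _ _
  have hsplit : (∫ τ in (0:ℝ)..(t + T), (t + T - τ) ^ (-q) * g τ)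
      = (∫ τ in (0:ℝ)..T, (t + T - τ) ^ (-q) * g τ)
        + ∫ τ in T..(t + T), (t + T - τ) ^ (-q) * g τ :=
    (intervalIntegral.integral_add_adjacent_intervals hI1 hI2).symm
  -- change of variables on the tail
  have hsub : (∫ τ in T..(t + T), (t + T - τ) ^ (-q) * g τ)
      = ∫ s in (0:ℝ)..t, (t + T - (s + T)) ^ (-q) * g (s + T) := by
    rw [intervalIntegral.integral_comp_add_right (fun τ => (t + T - τ) ^ (-q) * g τ) T]
    norm_num
  have htail : (∫ τ in T..(t + T), (t + T - τ) ^ (-q) * g τ)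
      = ∫ s in (0:ℝ)..t, (t - s) ^ (-q) * g s := by
    rw [hsub]
    apply intervalIntegral.integral_congr_ae
    apply Filter.Eventually.of_forall
    intro s hs
    rw [Set.uIoc_of_le ht] at hs
    rw [hgper s hs.1]
    ring_nf
  simp only [caputo]
  rw [hsplit, htail]
  ring
end

section
/- For 0 < q < 1 and a continuously differentiable T-periodic non-constant function x with bounded derivative, the difference D_*^q x(t+T) − D_*^q x(t) tends to 0 as t → ∞; hence the Caputo derivative of a periodic function is asymptotically T-periodic. -/
open MeasureTheory Real Filter

theorem caputo_asymptotically_periodic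
    (q T M : ℝ) (hq0 : 0 < q) (hq1 : q < 1) (hT : 0 < T)
    (x : ℝ → ℝ) (hx : ContDiff ℝ 1 x)
    (hper : ∀ t : ℝ, 0 ≤ t → x (t + T) = x t)
    (hnc : ∃ s t : ℝ, 0 ≤ s ∧ 0 ≤ t ∧ x s ≠ x t)
    (hbd : ∀ t : ℝ, 0 ≤ t → |deriv x t| ≤ M) :
    Tendsto (fun t => caputo q x (t + T) - caputo q x t) atTop (nhds 0) := by
  set g := deriv x with hg
  have hgc : Continuous g := hx.continuous_deriv le_rfl
  have hM0 : 0 ≤ M := (abs_nonneg _).trans (hbd 0 le_rfl)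
  set C : ℝ := 1 / Real.Gamma (1 - q) with hC
  -- derivative is periodic on positive reals
  have hgper : ∀ σ : ℝ, 0 < σ → g (σ + T) = g σ := by
    intro σ hσ
    have hev : (fun s => x (s + T)) =ᶠ[nhds σ] x := by
      filter_upwards [eventually_gt_nhds hσ] with s hs
      exact hper s hs.le
    have h1 := hev.deriv_eq
    rwa [deriv_comp_add_const] at h1
  have key : ∀ t : ℝ, 1 ≤ t →
      |caputo q x (t + T) - caputo q x t| ≤ |C| * (M * t ^ (-q) * T) := by
    intro t ht
    have ht0 : (0:ℝ) < t := lt_of_lt_of_le one_pos ht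
    -- integrability on [-T, t]
    have hrpow : IntervalIntegrable (fun u : ℝ => u ^ (-q)) volume 0 (t + T) :=
      intervalIntegral.intervalIntegrable_rpow' (by linarith)
    have hrpow2 : IntervalIntegrable (fun σ : ℝ => (t - σ) ^ (-q)) volume (-T) t := by
      have := (hrpow.comp_sub_left t).symm
      simpa using this
    have hImain : IntervalIntegrable (fun σ : ℝ => (t - σ) ^ (-q) * g (σ + T))
        volume (-T) t :=
      hrpow2.mul_continuousOn ((hgc.comp (continuous_add_right T)).continuousOn)
    have hsub1 : Set.uIcc (-T) (0:ℝ) ⊆ Set.uIcc (-T) t := by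
      apply Set.uIcc_subset_uIcc Set.left_mem_uIcc
      rw [Set.mem_uIcc]; left; constructor <;> linarith
    have hsub2 : Set.uIcc (0:ℝ) t ⊆ Set.uIcc (-T) t := by
      apply Set.uIcc_subset_uIcc _ Set.right_mem_uIcc
      rw [Set.mem_uIcc]; left; constructor <;> linarith
    have hI1 : IntervalIntegrable (fun σ : ℝ => (t - σ) ^ (-q) * g (σ + T))
        volume (-T) 0 := hImain.mono_set hsub1
    have hI2 : IntervalIntegrable (fun σ : ℝ => (t - σ) ^ (-q) * g (σ + T))
        volume 0 t := hImain.mono_set hsub2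
    -- change of variables in the first integral
    have hshift :
        (∫ τ in (0:ℝ)..(t + T), (t + T - τ) ^ (-q) * g τ)
          = ∫ σ in (-T)..t, (t - σ) ^ (-q) * g (σ + T) := by
      have h1 := intervalIntegral.integral_comp_add_right
        (a := -T) (b := t) (fun τ => (t + T - τ) ^ (-q) * g τ) T
      rw [neg_add_cancel] at h1
      rw [← h1]
      congr 1
      ext σ
      ring_nf
    -- split the integral
    have hsplit :
        (∫ σ in (-T)..t, (t - σ) ^ (-q) * g (σ + T))
          = (∫ σ in (-T)..(0:ℝ), (t - σ) ^ (-q) * g (σ + T))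
            + ∫ σ in (0:ℝ)..t, (t - σ) ^ (-q) * g (σ + T) :=
      (intervalIntegral.integral_add_adjacent_intervals hI1 hI2).symm
    -- use periodicity of g on (0, t]
    have hcongr :
        (∫ σ in (0:ℝ)..t, (t - σ) ^ (-q) * g (σ + T))
          = ∫ σ in (0:ℝ)..t, (t - σ) ^ (-q) * g σ := by
      apply intervalIntegral.integral_congr_ae
      apply Eventually.of_forall
      intro σ hσ
      rw [Set.uIoc_of_le ht0.le] at hσ
      rw [hgper σ hσ.1]
    have heq : caputo q x (t + T) - caputo q x t
        = C * ∫ σ in (-T)..(0:ℝ), (t - σ) ^ (-q) * g (σ + T) := by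
      simp only [caputo, ← hg, ← hC]
      rw [hshift, hsplit, hcongr]
      ring
    -- bound the remaining integral
    have hbound : ‖∫ σ in (-T)..(0:ℝ), (t - σ) ^ (-q) * g (σ + T)‖
        ≤ M * t ^ (-q) * |(0:ℝ) - (-T)| := by
      apply intervalIntegral.norm_integral_le_of_norm_le_const
      intro σ hσ
      rw [Set.uIoc_of_le (by linarith : -T ≤ (0:ℝ))] at hσ
      obtain ⟨hσ1, hσ2⟩ := hσ
      have htσ : (0:ℝ) < t - σ := by linarith
      have h1 : (t - σ) ^ (-q) ≤ t ^ (-q) :=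
        Real.rpow_le_rpow_of_nonpos ht0 (by linarith) (by linarith)
      have h2 : |g (σ + T)| ≤ M := hbd (σ + T) (by linarith)
      have h3 : (0:ℝ) ≤ (t - σ) ^ (-q) := Real.rpow_nonneg htσ.le _
      calc ‖(t - σ) ^ (-q) * g (σ + T)‖ = (t - σ) ^ (-q) * |g (σ + T)| := by
            rw [Real.norm_eq_abs, abs_mul, abs_of_nonneg h3]
        _ ≤ t ^ (-q) * M := mul_le_mul h1 h2 (abs_nonneg _) (Real.rpow_nonneg ht0.le _)
        _ = M * t ^ (-q) := by ring
    rw [heq, abs_mul]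
    have : |(0:ℝ) - (-T)| = T := by rw [abs_of_nonneg (by linarith)]; ring
    rw [this] at hbound
    exact mul_le_mul_of_nonneg_left (by simpa using hbound) (abs_nonneg _)
  -- conclude by squeezing
  have hB : Tendsto (fun t : ℝ => |C| * (M * t ^ (-q) * T)) atTop (nhds 0) := by
    have h1 := (tendsto_rpow_neg_atTop hq0).const_mul (|C| * M * T)
    rw [mul_zero] at h1
    refine h1.congr fun t => by ring
  refine squeeze_zero_norm' ?_ hB
  filter_upwards [eventually_ge_atTop (1:ℝ)] with t ht
  simpa using key t ht
end
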